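/- Let W_0, Y^N, Y_1^N and auxiliary variables be finite random variables, and define U_1 = Y_1^{J-1} and U = (Y^{J-1}, W_0, Z_{J+1}^N, J) with J uniform on {1,...,N} and independent of (W_0, Y^N, Y_1^N, Z^N). Then (1/N)·I(W_0 ; Y^N, Y_1^N) ≤ I(U ; Y_J, Y_{1,J} | U_1). -/

import Mathlib

open Finset Real

namespace RBC

variable {Ω : Type*} [Fintype Ω]

/-- Probability that a random variable `X` takes value `a`, under pmf `p` on `Ω`. -/
noncomputable def prob {α : Type*} [DecidableEq α] (p : Ω → ℝ) (X : Ω → α) (a : α) : ℝ :=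
  ∑ ω ∈ Finset.univ.filter (fun ω => X ω = a), p ω

/-- Shannon entropy of a random variable with values in a finite type. -/
noncomputable def ent {α : Type*} [Fintype α] [DecidableEq α] (p : Ω → ℝ) (X : Ω → α) : ℝ :=
  -∑ a : α, prob p X a * Real.log (prob p X a)

/-- Conditional entropy H(X|Y). -/
noncomputable def condEnt {α β : Type*} [Fintype α] [DecidableEq α] [Fintype β] [DecidableEq β]
    (p : Ω → ℝ) (X : Ω → α) (Y : Ω → β) : ℝ :=
  ent p (fun ω => (X ω, Y ω)) - ent p Y

/-- Mutual information I(X;Y). -/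
noncomputable def mi {α β : Type*} [Fintype α] [DecidableEq α] [Fintype β] [DecidableEq β]
    (p : Ω → ℝ) (X : Ω → α) (Y : Ω → β) : ℝ :=
  ent p X + ent p Y - ent p (fun ω => (X ω, Y ω))

/-- Conditional mutual information I(X;Y|Z). -/
noncomputable def cmi {α β γ : Type*} [Fintype α] [DecidableEq α] [Fintype β] [DecidableEq β]
    [Fintype γ] [DecidableEq γ] (p : Ω → ℝ) (X : Ω → α) (Y : Ω → β) (Z : Ω → γ) : ℝ :=
  ent p (fun ω => (X ω, Z ω)) + ent p (fun ω => (Y ω, Z ω))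
    - ent p (fun ω => (X ω, Y ω, Z ω)) - ent p Z

/-- Independence of two random variables. -/
def Indep {α β : Type*} [DecidableEq α] [DecidableEq β]
    (p : Ω → ℝ) (X : Ω → α) (Y : Ω → β) : Prop :=
  ∀ a b, prob p (fun ω => (X ω, Y ω)) (a, b) = prob p X a * prob p Y b

/-- The prefix vector `(X 0, ..., X (i-1))` (0-based time), i.e. `X^{i-1}` in 1-based notation. -/
def pre {α : Type*} (X : ℕ → Ω → α) (i : ℕ) : Ω → (Fin i → α) :=
  fun ω j => X j ω

/-- The suffix vector `(X i, ..., X (N-1))` (0-based time), i.e. `X_{i+1}^{N}` in 1-based notation. -/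
def suf {α : Type*} (X : ℕ → Ω → α) (i N : ℕ) : Ω → (Fin (N - i) → α) :=
  fun ω j => X (i + j) ω

/-!
By the chain rule, `I(W₀; Yᴺ, Y₁ᴺ) = ∑ⱼ I(W₀; Yⱼ, Y₁ⱼ | Y^{j-1}, Y₁^{j-1})`, and moving `Y^{j-1}`
from the condition into the first argument and adding `Z_{j+1}^N` there can only increase each
term, giving `I(Y^{j-1}, W₀, Z_{j+1}^N; Yⱼ, Y₁ⱼ | Y₁^{j-1})`. As `J` is uniform and independent
of the source, the average of these terms is the same quantity for the time `J`, conditioned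
also on `J`; moving `J` into the first argument once more gives the bound. Both monotonicity
steps are the nonnegativity of conditional mutual information, i.e. Gibbs' inequality.
-/

section Basic

variable {α β γ : Type*} [DecidableEq α] [DecidableEq β] [DecidableEq γ] {p : Ω → ℝ}

lemma prob_eq_sum_ite (X : Ω → α) (a : α) : prob p X a = ∑ ω, if X ω = a then p ω else 0 :=
  Finset.sum_filter _ _

lemma prob_nonneg (hp : ∀ ω, 0 ≤ p ω) (X : Ω → α) (a : α) : 0 ≤ prob p X a :=
  Finset.sum_nonneg fun ω _ => hp ω

lemma sum_prob [Fintype α] (X : Ω → α) : ∑ a, prob p X a = ∑ ω, p ω := by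
  simp only [prob_eq_sum_ite]
  rw [Finset.sum_comm]
  simp

lemma prob_comp [Fintype α] (f : α → β) (X : Ω → α) (b : β) :
    prob p (fun ω => f (X ω)) b = ∑ a with f a = b, prob p X a := by
  rw [prob, ← Finset.sum_fiberwise_of_maps_to (g := X) (t := {a | f a = b}) (by simp)]
  refine Finset.sum_congr rfl fun a ha => ?_
  rw [Finset.filter_filter, prob]
  congr 1
  ext ω
  simp only [Finset.mem_filter, Finset.mem_univ, true_and] at ha ⊢
  exact ⟨And.right, fun h => ⟨h ▸ ha, h⟩⟩

lemma prob_le_prob_comp (hp : ∀ ω, 0 ≤ p ω) (f : α → β) (X : Ω → α) (a : α) :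
    prob p X a ≤ prob p (fun ω => f (X ω)) (f a) :=
  Finset.sum_le_sum_of_subset_of_nonneg
    (fun ω hω => by simp_all) fun ω _ _ => hp ω

lemma sum_prob_pair_fst [Fintype α] (X : Ω → α) (Z : Ω → γ) (c : γ) :
    ∑ a, prob p (fun ω => (X ω, Z ω)) (a, c) = prob p Z c := by
  simp only [prob_eq_sum_ite, Prod.mk.injEq]
  rw [Finset.sum_comm]
  refine Finset.sum_congr rfl fun ω _ => ?_
  by_cases h : Z ω = c <;> simp [h]

lemma ent_eq_sum_negMulLog [Fintype α] (X : Ω → α) :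
    ent p X = ∑ a, negMulLog (prob p X a) := by
  simp [ent, negMulLog, Finset.sum_neg_distrib]

lemma ent_comp [Fintype α] [Fintype β] (f : α → β) (X : Ω → α) :
    ent p (fun ω => f (X ω)) = -∑ a, prob p X a * log (prob p (fun ω => f (X ω)) (f a)) := by
  rw [ent, ← Finset.sum_fiberwise _ f]
  congr 1
  refine Finset.sum_congr rfl fun b _ => ?_
  nth_rw 1 [prob_comp f X b]
  rw [Finset.sum_mul]
  exact Finset.sum_congr rfl fun a ha => by rw [(Finset.mem_filter.mp ha).2]

lemma ent_comp_of_injOn [Fintype α] [Fintype β] (f : α → β) (X : Ω → α)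
    (hf : Set.InjOn f (Set.range X)) :
    ent p (fun ω => f (X ω)) = ent p X := by
  rw [ent_comp, ent]
  congr 1
  refine Finset.sum_congr rfl fun a _ => ?_
  by_cases ha : a ∈ Set.range X
  · congr 3
    refine Finset.sum_congr ?_ fun _ _ => rfl
    ext ω
    simpa using hf.eq_iff (Set.mem_range_self ω) ha
  · have : prob p X a = 0 :=
      Finset.sum_eq_zero fun ω hω => absurd ⟨ω, (Finset.mem_filter.mp hω).2⟩ ha
    simp [this]

lemma ent_comp_of_injective [Fintype α] [Fintype β] {f : α → β} (hf : Function.Injective f)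
    (X : Ω → α) :
    ent p (fun ω => f (X ω)) = ent p X :=
  ent_comp_of_injOn f X hf.injOn

lemma ent_const [Fintype α] (hsum : ∑ ω, p ω = 1) (c : α) : ent p (fun _ => c) = 0 := by
  have : ∀ a, prob p (fun _ => c) a = if c = a then 1 else 0 := fun a => by
    by_cases h : c = a <;> simp [prob, h, hsum]
  simp [ent, this, apply_ite]

end Basic

lemma sum_mul_log_le_sum_mul_log {κ : Type*} [Fintype κ] (r q : κ → ℝ) (hr : ∀ v, 0 ≤ r v)
    (hq : ∀ v, 0 ≤ q v) (hrq : ∀ v, r v ≠ 0 → q v ≠ 0) (hsum : ∑ v, q v ≤ ∑ v, r v) :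
    ∑ v, r v * log (q v) ≤ ∑ v, r v * log (r v) := by
  have key : ∀ v, r v * log (q v) - r v * log (r v) ≤ q v - r v := by
    intro v
    rcases (hr v).eq_or_lt with h | h
    · simp [← h, hq v]
    have hqv : 0 < q v := (hq v).lt_of_ne' (hrq v h.ne')
    have hlog := Real.log_le_sub_one_of_pos (div_pos hqv h)
    rw [Real.log_div hqv.ne' h.ne'] at hlog
    calc r v * log (q v) - r v * log (r v) = r v * (log (q v) - log (r v)) := by ring
      _ ≤ r v * (q v / r v - 1) := mul_le_mul_of_nonneg_left hlog h.le
      _ = q v - r v := by field_simp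
  have := Finset.sum_le_sum fun v (_ : v ∈ Finset.univ) => key v
  rw [Finset.sum_sub_distrib, Finset.sum_sub_distrib] at this
  linarith

section Information

variable {α β γ δ : Type*} [Fintype α] [DecidableEq α] [Fintype β] [DecidableEq β]
  [Fintype γ] [DecidableEq γ] [Fintype δ] [DecidableEq δ] {p : Ω → ℝ}

lemma condEnt_comp_of_injOn (X : Ω → α) (f : β → γ) (Z : Ω → β)
    (hf : Set.InjOn f (Set.range Z)) : condEnt p X (fun ω => f (Z ω)) = condEnt p X Z := by
  have hpair : Set.InjOn (Prod.map id f) (Set.range fun ω => (X ω, Z ω)) := by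
    rintro _ ⟨ω, rfl⟩ _ ⟨ω', rfl⟩ h
    simp only [Prod.map, id, Prod.mk.injEq] at h ⊢
    exact ⟨h.1, hf ⟨ω, rfl⟩ ⟨ω', rfl⟩ h.2⟩
  rw [condEnt, condEnt, ent_comp_of_injOn f Z hf, ← ent_comp_of_injOn _ _ hpair]
  rfl

lemma condEnt_const (hsum : ∑ ω, p ω = 1) (X : Ω → α) (c : β) :
    condEnt p X (fun _ => c) = ent p X := by
  rw [condEnt, ent_const hsum, sub_zero]
  exact ent_comp_of_injective (f := fun a => (a, c)) (fun _ _ h => (Prod.mk.inj h).1) X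

lemma mi_eq_ent_sub_condEnt (X : Ω → α) (Y : Ω → β) : mi p X Y = ent p X - condEnt p X Y := by
  rw [mi, condEnt]; ring

lemma cmi_eq_condEnt_sub_condEnt (X : Ω → α) (Y : Ω → β) (Z : Ω → γ) :
    cmi p X Y Z = condEnt p X Z - condEnt p X (fun ω => (Y ω, Z ω)) := by
  simp only [cmi, condEnt]; ring

lemma mi_comp_right_of_injective {f : β → γ} (hf : Function.Injective f) (X : Ω → α)
    (Y : Ω → β) : mi p X (fun ω => f (Y ω)) = mi p X Y := by
  rw [mi_eq_ent_sub_condEnt, mi_eq_ent_sub_condEnt, condEnt_comp_of_injOn X f Y hf.injOn]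

lemma cmi_comp_cond_of_injective {f : γ → δ} (hf : Function.Injective f) (X : Ω → α)
    (Y : Ω → β) (Z : Ω → γ) : cmi p X Y (fun ω => f (Z ω)) = cmi p X Y Z := by
  rw [cmi_eq_condEnt_sub_condEnt, cmi_eq_condEnt_sub_condEnt, condEnt_comp_of_injOn X f Z hf.injOn,
    ← condEnt_comp_of_injOn X _ _ (Function.injective_id.prodMap hf).injOn]
  rfl

lemma cmi_comp_left_of_injective {f : α → δ} (hf : Function.Injective f) (X : Ω → α)
    (Y : Ω → β) (Z : Ω → γ) : cmi p (fun ω => f (X ω)) Y Z = cmi p X Y Z := by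
  have hXZ : ent p (fun ω => (f (X ω), Z ω)) = ent p (fun ω => (X ω, Z ω)) :=
    ent_comp_of_injective (hf.prodMap Function.injective_id) fun ω => (X ω, Z ω)
  have hXYZ : ent p (fun ω => (f (X ω), Y ω, Z ω)) = ent p (fun ω => (X ω, Y ω, Z ω)) :=
    ent_comp_of_injective (hf.prodMap Function.injective_id) fun ω => (X ω, Y ω, Z ω)
  rw [cmi, cmi, hXZ, hXYZ]

lemma ent_left_comm (X : Ω → α) (Y : Ω → β) (Z : Ω → γ) :
    ent p (fun ω => (X ω, Y ω, Z ω)) = ent p (fun ω => (Y ω, X ω, Z ω)) :=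
  ent_comp_of_injective (f := fun v : β × α × γ => (v.2.1, v.1, v.2.2))
    (by rintro ⟨_, _, _⟩ ⟨_, _, _⟩ h; simp_all) fun ω => (Y ω, X ω, Z ω)

lemma cmi_comm (X : Ω → α) (Y : Ω → β) (Z : Ω → γ) : cmi p X Y Z = cmi p Y X Z := by
  rw [cmi, cmi, ent_left_comm X Y Z]; ring

lemma cmi_pair_right (X : Ω → α) (A : Ω → β) (C : Ω → γ) (D : Ω → δ) :
    cmi p X (fun ω => (A ω, C ω)) D = cmi p X A D + cmi p X C (fun ω => (A ω, D ω)) := by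
  have hassoc : condEnt p X (fun ω => (C ω, A ω, D ω)) = condEnt p X (fun ω => ((A ω, C ω), D ω)) :=
    condEnt_comp_of_injOn X (fun v : (β × γ) × δ => (v.1.2, v.1.1, v.2))
      (fun ω => ((A ω, C ω), D ω))
      (Function.Injective.injOn (by rintro ⟨⟨_, _⟩, _⟩ ⟨⟨_, _⟩, _⟩ h; simp_all))
  simp only [cmi_eq_condEnt_sub_condEnt, hassoc]; ring

lemma cmi_pair_left (A : Ω → α) (C : Ω → β) (B : Ω → γ) (D : Ω → δ) :
    cmi p (fun ω => (A ω, C ω)) B D = cmi p A B D + cmi p C B (fun ω => (A ω, D ω)) := by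
  rw [cmi_comm, cmi_pair_right, cmi_comm B, cmi_comm B]

lemma sum_prob_pair_mul_div_prob (X : Ω → α) (Y : Ω → β) (Z : Ω → γ) :
    ∑ v : α × β × γ, prob p (fun ω => (X ω, Z ω)) (v.1, v.2.2)
      * prob p (fun ω => (Y ω, Z ω)) (v.2.1, v.2.2) / prob p Z v.2.2 = ∑ ω, p ω :=
  calc _ = ∑ c, (∑ a, prob p (fun ω => (X ω, Z ω)) (a, c))
        * (∑ b, prob p (fun ω => (Y ω, Z ω)) (b, c)) / prob p Z c := by
        simp only [Fintype.sum_prod_type, Finset.sum_mul_sum, Finset.sum_div]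
        exact (Finset.sum_congr rfl fun _ _ => Finset.sum_comm).trans Finset.sum_comm
    _ = ∑ c, prob p Z c := by simp only [sum_prob_pair_fst, mul_self_div_self]
    _ = ∑ ω, p ω := sum_prob Z

lemma cmi_nonneg (hp : ∀ ω, 0 ≤ p ω) (X : Ω → α) (Y : Ω → β) (Z : Ω → γ) :
    0 ≤ cmi p X Y Z := by
  let r : α × β × γ → ℝ := prob p fun ω => (X ω, Y ω, Z ω)
  let m₁ : α × β × γ → ℝ := fun v => prob p (fun ω => (X ω, Z ω)) (v.1, v.2.2)
  let m₂ : α × β × γ → ℝ := fun v => prob p (fun ω => (Y ω, Z ω)) (v.2.1, v.2.2)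
  let m₃ : α × β × γ → ℝ := fun v => prob p Z v.2.2
  have hXZ : ent p (fun ω => (X ω, Z ω)) = -∑ v, r v * log (m₁ v) :=
    ent_comp (fun v : α × β × γ => (v.1, v.2.2)) fun ω => (X ω, Y ω, Z ω)
  have hYZ : ent p (fun ω => (Y ω, Z ω)) = -∑ v, r v * log (m₂ v) :=
    ent_comp (fun v : α × β × γ => (v.2.1, v.2.2)) fun ω => (X ω, Y ω, Z ω)
  have hZ : ent p Z = -∑ v, r v * log (m₃ v) :=
    ent_comp (fun v : α × β × γ => v.2.2) fun ω => (X ω, Y ω, Z ω)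
  have hmarg : ∀ v, r v ≠ 0 → m₁ v ≠ 0 ∧ m₂ v ≠ 0 ∧ m₃ v ≠ 0 := fun v hv => by
    have hrv : 0 < r v := (prob_nonneg hp _ v).lt_of_ne' hv
    exact ⟨(hrv.trans_le (prob_le_prob_comp hp (fun v => (v.1, v.2.2)) _ v)).ne',
      (hrv.trans_le (prob_le_prob_comp hp (fun v => (v.2.1, v.2.2)) _ v)).ne',
      (hrv.trans_le (prob_le_prob_comp hp (fun v => v.2.2) _ v)).ne'⟩
  have hlog : ∀ v, r v * log (m₁ v * m₂ v / m₃ v)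
      = r v * log (m₁ v) + r v * log (m₂ v) - r v * log (m₃ v) := fun v => by
    by_cases hv : r v = 0
    · simp [hv]
    obtain ⟨h₁, h₂, h₃⟩ := hmarg v hv
    rw [log_div (mul_ne_zero h₁ h₂) h₃, log_mul h₁ h₂]
    ring
  -- Gibbs' inequality for `r` against `p(x,z) p(y,z) / p(z)`, which has the same total mass.
  have hgibbs := sum_mul_log_le_sum_mul_log r (fun v => m₁ v * m₂ v / m₃ v)
    (prob_nonneg hp _) (fun v => div_nonneg (mul_nonneg (prob_nonneg hp _ _)
      (prob_nonneg hp _ _)) (prob_nonneg hp _ _))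
    (fun v hv => div_ne_zero (mul_ne_zero (hmarg v hv).1 (hmarg v hv).2.1) (hmarg v hv).2.2)
    (by rw [sum_prob_pair_mul_div_prob X Y Z, sum_prob])
  simp only [hlog, Finset.sum_sub_distrib, Finset.sum_add_distrib] at hgibbs
  rw [cmi, hXZ, hYZ, hZ, ent]
  linarith

lemma cmi_le_cmi_pair (hp : ∀ ω, 0 ≤ p ω) (A : Ω → α) (C : Ω → β) (B : Ω → γ) (D : Ω → δ) :
    cmi p A B D ≤ cmi p (fun ω => (A ω, C ω)) B D := by
  rw [cmi_pair_left]
  linarith [cmi_nonneg hp C B fun ω => (A ω, D ω)]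

lemma cmi_cond_le_cmi_pair (hp : ∀ ω, 0 ≤ p ω) (A : Ω → α) (C : Ω → β) (B : Ω → γ) (D : Ω → δ) :
    cmi p C B (fun ω => (A ω, D ω)) ≤ cmi p (fun ω => (A ω, C ω)) B D := by
  rw [cmi_pair_left]
  linarith [cmi_nonneg hp A B D]

end Information

section Conditioning

variable {ι 𝒱 α β γ : Type*} [DecidableEq ι] [DecidableEq 𝒱] [DecidableEq α] [DecidableEq β]
  [DecidableEq γ] {p q : Ω → ℝ}

/-- The conditional law `p(· | J = j)`, identically `0` when `J = j` is a null event. -/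
noncomputable def condPMF (p : Ω → ℝ) (J : Ω → ι) (j : ι) : Ω → ℝ :=
  fun ω => if J ω = j then p ω / prob p J j else 0

lemma condPMF_ne_zero {J : Ω → ι} {j : ι} {ω : Ω} (h : condPMF p J j ω ≠ 0) : J ω = j := by
  by_contra hne
  simp [condPMF, hne] at h

lemma prob_mul_prob_condPMF (hp : ∀ ω, 0 ≤ p ω) (J : Ω → ι) (X : Ω → α) (j : ι) (a : α) :
    prob p J j * prob (condPMF p J j) X a = prob p (fun ω => (J ω, X ω)) (j, a) := by
  rcases eq_or_ne (prob p J j) 0 with hj | hj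
  · rw [hj, zero_mul]
    exact (le_antisymm ((prob_le_prob_comp hp Prod.fst _ (j, a)).trans_eq hj)
      (prob_nonneg hp _ _)).symm
  rw [prob_eq_sum_ite (p := condPMF p J j), prob_eq_sum_ite (p := p) fun ω => (J ω, X ω),
    Finset.mul_sum]
  refine Finset.sum_congr rfl fun ω _ => ?_
  by_cases hJ : J ω = j <;> by_cases hX : X ω = a <;> simp [condPMF, hJ, hX]
  field_simp

lemma sum_prob_condPMF [Fintype α] {J : Ω → ι} {j : ι} (hj : prob p J j ≠ 0) (X : Ω → α) :
    ∑ a, prob (condPMF p J j) X a = 1 := by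
  rw [sum_prob]
  calc ∑ ω, condPMF p J j ω = (∑ ω, if J ω = j then p ω else 0) / prob p J j := by
        rw [Finset.sum_div]
        exact Finset.sum_congr rfl fun ω _ => by split_ifs <;> simp [condPMF, *]
    _ = 1 := by rw [← prob_eq_sum_ite, div_self hj]

lemma ent_pair_eq_add_sum_condPMF [Fintype ι] [Fintype α] (hp : ∀ ω, 0 ≤ p ω) (J : Ω → ι)
    (X : Ω → α) :
    ent p (fun ω => (J ω, X ω)) = ent p J + ∑ j, prob p J j * ent (condPMF p J j) X := by
  have hfiber : ∀ j, ∑ a, negMulLog (prob p (fun ω => (J ω, X ω)) (j, a))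
      = negMulLog (prob p J j) + prob p J j * ent (condPMF p J j) X := fun j => by
    simp only [← prob_mul_prob_condPMF hp, negMulLog_mul, Finset.sum_add_distrib,
      ← Finset.sum_mul, ← Finset.mul_sum, ← ent_eq_sum_negMulLog]
    rcases eq_or_ne (prob p J j) 0 with hj | hj
    · simp [hj]
    · rw [sum_prob_condPMF hj, one_mul]
  rw [ent_eq_sum_negMulLog, Fintype.sum_prod_type, Finset.sum_congr rfl fun j _ => hfiber j,
    Finset.sum_add_distrib, ent_eq_sum_negMulLog]

lemma cmi_cond_pair_eq_sum_condPMF [Fintype ι] [Fintype α] [Fintype β] [Fintype γ]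
    (hp : ∀ ω, 0 ≤ p ω) (J : Ω → ι) (X : Ω → α) (Y : Ω → β) (Z : Ω → γ) :
    cmi p X Y (fun ω => (J ω, Z ω)) = ∑ j, prob p J j * cmi (condPMF p J j) X Y Z := by
  have hXYJZ : ent p (fun ω => (X ω, Y ω, J ω, Z ω)) = ent p (fun ω => (J ω, X ω, Y ω, Z ω)) :=
    ent_comp_of_injective (f := fun v : ι × α × β × γ => (v.2.1, v.2.2.1, v.1, v.2.2.2))
      (by rintro ⟨_, _, _, _⟩ ⟨_, _, _, _⟩ h; simp_all) fun ω => (J ω, X ω, Y ω, Z ω)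
  simp only [cmi]
  rw [ent_left_comm X J Z, ent_left_comm Y J Z, hXYJZ,
    ent_pair_eq_add_sum_condPMF hp J fun ω => (X ω, Z ω),
    ent_pair_eq_add_sum_condPMF hp J fun ω => (Y ω, Z ω),
    ent_pair_eq_add_sum_condPMF hp J fun ω => (X ω, Y ω, Z ω), ent_pair_eq_add_sum_condPMF hp J Z]
  simp only [mul_add, mul_sub, Finset.sum_add_distrib, Finset.sum_sub_distrib]
  ring

lemma prob_congr_of_support {X X' : Ω → α} (h : ∀ ω, q ω ≠ 0 → X ω = X' ω) (a : α) :
    prob q X a = prob q X' a := by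
  simp only [prob_eq_sum_ite]
  refine Finset.sum_congr rfl fun ω _ => ?_
  by_cases hq : q ω = 0
  · simp [hq]
  · rw [h ω hq]

lemma ent_congr_of_support [Fintype α] {X X' : Ω → α} (h : ∀ ω, q ω ≠ 0 → X ω = X' ω) :
    ent q X = ent q X' := by
  simp only [ent, prob_congr_of_support h]

lemma cmi_congr_of_support [Fintype α] [Fintype β] [Fintype γ] {X X' : Ω → α} {Y Y' : Ω → β}
    {Z Z' : Ω → γ} (hX : ∀ ω, q ω ≠ 0 → X ω = X' ω) (hY : ∀ ω, q ω ≠ 0 → Y ω = Y' ω)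
    (hZ : ∀ ω, q ω ≠ 0 → Z ω = Z' ω) : cmi q X Y Z = cmi q X' Y' Z' := by
  simp only [cmi]
  congr 1
  · congr 1
    · congr 1
      · exact ent_congr_of_support fun ω h => by rw [hX ω h, hZ ω h]
      · exact ent_congr_of_support fun ω h => by rw [hY ω h, hZ ω h]
    · exact ent_congr_of_support fun ω h => by rw [hX ω h, hY ω h, hZ ω h]
  · exact ent_congr_of_support hZ

lemma prob_condPMF_of_indep [Fintype 𝒱] [Fintype α] (hp : ∀ ω, 0 ≤ p ω) {J : Ω → ι}
    {V : Ω → 𝒱} (hind : Indep p J V) {j : ι} (hj : prob p J j ≠ 0) (f : 𝒱 → α) (a : α) :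
    prob (condPMF p J j) (fun ω => f (V ω)) a = prob p (fun ω => f (V ω)) a := by
  rw [prob_comp, prob_comp]
  exact Finset.sum_congr rfl fun v _ =>
    mul_left_cancel₀ hj (by rw [prob_mul_prob_condPMF hp, hind])

lemma ent_condPMF_of_indep [Fintype 𝒱] [Fintype α] (hp : ∀ ω, 0 ≤ p ω) {J : Ω → ι}
    {V : Ω → 𝒱} (hind : Indep p J V) {j : ι} (hj : prob p J j ≠ 0) (f : 𝒱 → α) :
    ent (condPMF p J j) (fun ω => f (V ω)) = ent p (fun ω => f (V ω)) := by
  simp only [ent, prob_condPMF_of_indep hp hind hj]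

lemma cmi_condPMF_of_indep [Fintype 𝒱] [Fintype α] [Fintype β] [Fintype γ]
    (hp : ∀ ω, 0 ≤ p ω) {J : Ω → ι} {V : Ω → 𝒱} (hind : Indep p J V) {j : ι}
    (hj : prob p J j ≠ 0) (A : 𝒱 → α) (B : 𝒱 → β) (C : 𝒱 → γ) :
    cmi (condPMF p J j) (fun ω => A (V ω)) (fun ω => B (V ω)) (fun ω => C (V ω))
      = cmi p (fun ω => A (V ω)) (fun ω => B (V ω)) (fun ω => C (V ω)) := by
  have h₁ := ent_condPMF_of_indep hp hind hj fun v => (A v, C v)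
  have h₂ := ent_condPMF_of_indep hp hind hj fun v => (B v, C v)
  have h₃ := ent_condPMF_of_indep hp hind hj fun v => (A v, B v, C v)
  have h₄ := ent_condPMF_of_indep hp hind hj C
  simp only [cmi, h₁, h₂, h₃, h₄]

lemma sum_prob_mul_cmi_le_of_indep [Fintype ι] [Fintype 𝒱] [Fintype α] [Fintype β] [Fintype γ]
    (hp : ∀ ω, 0 ≤ p ω) {J : Ω → ι} {V : Ω → 𝒱} (hind : Indep p J V)
    (A : ι → 𝒱 → α) (B : ι → 𝒱 → β) (C : ι → 𝒱 → γ) :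
    ∑ j, prob p J j * cmi p (fun ω => A j (V ω)) (fun ω => B j (V ω)) (fun ω => C j (V ω))
      ≤ cmi p (fun ω => (J ω, A (J ω) (V ω))) (fun ω => B (J ω) (V ω))
          (fun ω => C (J ω) (V ω)) :=
  calc _ = ∑ j, prob p J j * cmi (condPMF p J j) (fun ω => A (J ω) (V ω))
          (fun ω => B (J ω) (V ω)) (fun ω => C (J ω) (V ω)) := by
        refine Finset.sum_congr rfl fun j _ => ?_
        rcases eq_or_ne (prob p J j) 0 with hj | hj
        · simp [hj]
        rw [← cmi_condPMF_of_indep hp hind hj]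
        congr 1
        refine cmi_congr_of_support ?_ ?_ ?_ <;>
          exact fun ω h => by rw [condPMF_ne_zero h]
    _ = cmi p (fun ω => A (J ω) (V ω)) (fun ω => B (J ω) (V ω))
          (fun ω => (J ω, C (J ω) (V ω))) :=
        (cmi_cond_pair_eq_sum_condPMF hp J _ _ _).symm
    _ ≤ _ := cmi_cond_le_cmi_pair hp J _ _ _

end Conditioning

section Prefix

variable {α β γ : Type*} {N : ℕ}

/-- The prefix `x₀, …, x_{k-1}`, padded with `none` so that all prefixes have the same type. -/
def prefixPad (k : ℕ) (x : Fin N → α) : Fin N → Option α :=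
  fun i => if (i : ℕ) < k then some (x i) else none

lemma prefixPad_zero (x : Fin N → α) : prefixPad 0 x = fun _ => none := by
  funext i
  simp [prefixPad]

lemma prefixPad_self (k : Fin N) (x : Fin N → α) : prefixPad k x k = none := by
  simp [prefixPad]

lemma prefixPad_succ (k : Fin N) (x : Fin N → α) :
    prefixPad (k + 1) x = Function.update (prefixPad k x) k (some (x k)) := by
  funext i
  rcases eq_or_ne i k with rfl | hik
  · simp [prefixPad]
  · have hne : (i : ℕ) ≠ k := Fin.val_ne_of_ne hik
    simp only [prefixPad, Function.update_of_ne hik, Nat.lt_succ_iff, le_iff_lt_or_eq, hne,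
      or_false]

lemma prefixPad_injective : Function.Injective (prefixPad N : (Fin N → α) → Fin N → Option α) :=
  fun _ _ h => funext fun i => by simpa [prefixPad] using congrFun h i

lemma prefixPad_map (f : α → β) (k : ℕ) (x : Fin N → α) :
    (fun i => (prefixPad k x i).map f) = prefixPad k fun i => f (x i) := by
  funext i
  simp only [prefixPad, apply_ite (Option.map f), Option.map_some, Option.map_none]

lemma injOn_update_some [DecidableEq γ] (k : γ) :
    Set.InjOn (fun v : α × (γ → Option α) => Function.update v.2 k (some v.1))
      {v | v.2 k = none} := by
  rintro ⟨a, m⟩ hm ⟨b, n⟩ hn h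
  change m k = none at hm
  change n k = none at hn
  have hab : a = b := by simpa using congrFun h k
  subst hab
  refine Prod.ext rfl (funext fun i => show m i = n i from ?_)
  rcases eq_or_ne i k with rfl | hik
  · rw [hm, hn]
  · simpa [hik] using congrFun h i

lemma injective_unzip_option :
    Function.Injective fun m : γ → Option (α × β) =>
      ((fun i => (m i).map Prod.fst), (fun i => (m i).map Prod.snd)) := by
  intro m n h
  funext i
  have h₁ := congrFun (congrArg Prod.fst h) i
  have h₂ := congrFun (congrArg Prod.snd h) i
  cases hm : m i <;> cases hn : n i <;> simp_all [Prod.ext_iff]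

end Prefix

section ChainRule

variable {α β γ : Type*} [Fintype α] [DecidableEq α] [Fintype β] [DecidableEq β]
  [Fintype γ] [DecidableEq γ] {p : Ω → ℝ} {N : ℕ}

lemma mi_eq_sum_cmi_prefixPad (hsum : ∑ ω, p ω = 1) (W : Ω → γ) (X : Fin N → Ω → α) :
    mi p W (fun ω i => X i ω) = ∑ j : Fin N, cmi p W (X j) fun ω => prefixPad j fun i => X i ω := by
  let H : ℕ → ℝ := fun k => condEnt p W fun ω => prefixPad k fun i => X i ω
  have hstep : ∀ j : Fin N,
      cmi p W (X j) (fun ω => prefixPad j fun i => X i ω) = H j - H (j + 1) := by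
    intro j
    rw [cmi_eq_condEnt_sub_condEnt]
    simp only [H, prefixPad_succ]
    congr 1
    refine (condEnt_comp_of_injOn W _ _ ((injOn_update_some (j : Fin N)).mono ?_)).symm
    rintro _ ⟨ω, rfl⟩
    exact prefixPad_self j fun i => X i ω
  have h0 : H 0 = ent p W := by simp only [H, prefixPad_zero, condEnt_const hsum]
  have hN : H N = condEnt p W fun ω i => X i ω :=
    condEnt_comp_of_injOn W _ _ prefixPad_injective.injOn
  rw [Finset.sum_congr rfl fun j _ => hstep j, Fin.sum_univ_eq_sum_range (fun k => H k - H (k + 1)),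
    Finset.sum_range_sub', h0, hN, mi_eq_ent_sub_condEnt]

lemma mi_pair_eq_sum_cmi_prefixPad (hsum : ∑ ω, p ω = 1) (W : Ω → γ) (Y : Fin N → Ω → α)
    (Y₁ : Fin N → Ω → β) :
    mi p W (fun ω => ((fun i => Y i ω), (fun i => Y₁ i ω)))
      = ∑ j : Fin N, cmi p W (fun ω => (Y j ω, Y₁ j ω))
          fun ω => (prefixPad j fun i => Y i ω, prefixPad j fun i => Y₁ i ω) := by
  refine (mi_comp_right_of_injective (Equiv.arrowProdEquivProdArrow _ _ _).injective W
    fun ω i => (Y i ω, Y₁ i ω)).trans ?_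
  rw [mi_eq_sum_cmi_prefixPad hsum]
  refine Finset.sum_congr rfl fun j _ => ?_
  rw [← cmi_comp_cond_of_injective injective_unzip_option]
  simp only [prefixPad_map]

end ChainRule

/-- Outer-bound step `R₀ ≤ I(U ; Y, Y₁ | U₁)`:
with `U₁ = Y₁^{J-1}` and `U = (Y^{J-1}, W₀, Z_{J+1}^N, J)` (prefixes/suffixes encoded as
option-padded length-`N` vectors), `(1/N)·I(W₀ ; Y^N, Y₁^N) ≤ I(U ; Y_J, Y_{1,J} | U₁)`. -/
theorem outer_bound_R0
    {𝒲₀ 𝒴 𝒴₁ 𝒵 : Type*}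
    [Fintype 𝒲₀] [DecidableEq 𝒲₀] [Fintype 𝒴] [DecidableEq 𝒴]
    [Fintype 𝒴₁] [DecidableEq 𝒴₁] [Fintype 𝒵] [DecidableEq 𝒵]
    (p : Ω → ℝ) (hp : ∀ ω, 0 ≤ p ω) (hsum : ∑ ω, p ω = 1)
    (N : ℕ) (W₀ : Ω → 𝒲₀) (Y : Fin N → Ω → 𝒴) (Y₁ : Fin N → Ω → 𝒴₁) (Z : Fin N → Ω → 𝒵)
    (J : Ω → Fin N)
    (hJ : ∀ j : Fin N, prob p J j = 1 / N)
    (hindep : Indep p J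
      (fun ω => (W₀ ω, (fun i => Y i ω : Fin N → 𝒴), (fun i => Y₁ i ω : Fin N → 𝒴₁),
        (fun i => Z i ω : Fin N → 𝒵)))) :
    (1 / (N : ℝ)) * mi p W₀
        (fun ω => ((fun i => Y i ω : Fin N → 𝒴), (fun i => Y₁ i ω : Fin N → 𝒴₁)))
      ≤ cmi p
          -- U = (Y^{J-1}, W₀, Z_{J+1}^N, J)
          (fun ω =>
            ((fun i : Fin N => if (i : ℕ) < (J ω : ℕ) then some (Y i ω) else none),
              W₀ ω,
              (fun i : Fin N => if (J ω : ℕ) < (i : ℕ) then some (Z i ω) else none),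
              J ω))
          -- (Y_J, Y_{1,J})
          (fun ω => (Y (J ω) ω, Y₁ (J ω) ω))
          -- U₁ = Y₁^{J-1}
          (fun ω => (fun i : Fin N => if (i : ℕ) < (J ω : ℕ) then some (Y₁ i ω) else none)) := by
  let U (j : Fin N) (v : 𝒲₀ × (Fin N → 𝒴) × (Fin N → 𝒴₁) × (Fin N → 𝒵)) :=
    (prefixPad j v.2.1, v.1, fun i : Fin N => if (j : ℕ) < (i : ℕ) then some (v.2.2.2 i) else none)
  let Out (j : Fin N) (v : 𝒲₀ × (Fin N → 𝒴) × (Fin N → 𝒴₁) × (Fin N → 𝒵)) := (v.2.1 j, v.2.2.1 j)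
  let U₁ (j : Fin N) (v : 𝒲₀ × (Fin N → 𝒴) × (Fin N → 𝒴₁) × (Fin N → 𝒵)) := prefixPad j v.2.2.1
  have hshare := sum_prob_mul_cmi_le_of_indep hp hindep U Out U₁
  simp only [hJ] at hshare
  rw [mi_pair_eq_sum_cmi_prefixPad hsum, Finset.mul_sum]
  calc _ ≤ _ := by
        gcongr with j
        exact (cmi_le_cmi_pair hp W₀ _ _ _).trans (cmi_cond_le_cmi_pair hp _ _ _ _)
    _ ≤ _ := hshare
    _ = _ := (cmi_comp_left_of_injective (f := fun u => (u.2.1, u.2.2.1, u.2.2.2, u.1))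
        (by rintro ⟨_, _, _, _⟩ ⟨_, _, _, _⟩ h; simp_all) _ _ _).symm

end RBC
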